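/- For every dimension d ≥ 1 and every function f : {−1,1}^d → ℝ, there exists a fully connected binarized neural network with one hidden layer whose output function O satisfies O(x) = f(x) for all x ∈ {−1,1}^d; i.e., a single-hidden-layer fully connected BNN can represent every real-valued function on the binary hypercube exactly. -/

import Mathlib

/-- The binarized activation function with threshold `θ`:
`σ θ t = 1` if `t > θ`, and `-1` otherwise. -/
noncomputable def binAct (θ t : ℝ) : ℝ := if t > θ then 1 else -1

/-!
Index hidden neurons by pairs `(y, b)` with `y ∈ {−1,1}^d` and `b : Bool`, all with weight
vector `y`. For `x ∈ {−1,1}^d` the pre-activation `⟨y, x⟩ = d − 2·#{i | yᵢ ≠ xᵢ}` is at most `d`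
and exceeds `d − 1` only when `y = x`. So thresholds `d − 1` and `d` give
`σ_{d−1}⟨y, x⟩ − σ_d⟨y, x⟩ = 2·[y = x]`, and output weights `± f(y) / 2` on the two neurons of
`y` make the network compute `∑_y f(y)·[y = x] = f(x)`.
-/

open Finset

lemma binAct_of_lt {θ t : ℝ} (h : θ < t) : binAct θ t = 1 := if_pos h

lemma binAct_of_le {θ t : ℝ} (h : t ≤ θ) : binAct θ t = -1 := if_neg h.not_gt

noncomputable def bnnOutput {ι κ : Type*} [Fintype ι] [Fintype κ]
    (W : ι → κ → ℝ) (θ v : κ → ℝ) (x : ι → ℝ) : ℝ :=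
  ∑ k, v k * binAct (θ k) (∑ i, W i k * x i)

lemma bnnOutput_comp_equiv {ι κ κ' : Type*} [Fintype ι] [Fintype κ] [Fintype κ']
    (e : κ' ≃ κ) (W : ι → κ → ℝ) (θ v : κ → ℝ) (x : ι → ℝ) :
    bnnOutput (fun i j => W i (e j)) (θ ∘ e) (v ∘ e) x = bnnOutput W θ v x :=
  e.sum_comp fun k => v k * binAct (θ k) (∑ i, W i k * x i)

def signOfBool (b : Bool) : ℝ := if b then 1 else -1

lemma signOfBool_eq_one_or (b : Bool) : signOfBool b = 1 ∨ signOfBool b = -1 := by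
  cases b <;> simp [signOfBool]

lemma signOfBool_injective : Function.Injective signOfBool := by
  intro a b
  cases a <;> cases b <;> norm_num [signOfBool]

lemma exists_signOfBool_comp_eq {ι : Type*} {x : ι → ℝ} (hx : ∀ i, x i = 1 ∨ x i = -1) :
    ∃ y : ι → Bool, signOfBool ∘ y = x :=
  ⟨fun i => decide (x i = 1), funext fun i => by
    rcases hx i with h | h <;> norm_num [signOfBool, h]⟩

section SignVectors

variable {ι : Type*} [Fintype ι]

lemma mul_eq_ite_of_sign {a b : ℝ} (ha : a = 1 ∨ a = -1) (hb : b = 1 ∨ b = -1) :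
    a * b = if a = b then 1 else -1 := by
  rcases ha with rfl | rfl <;> rcases hb with rfl | rfl <;> norm_num

open Classical in
lemma sum_mul_eq_card_sub_two_mul_card_ne {x y : ι → ℝ}
    (hx : ∀ i, x i = 1 ∨ x i = -1) (hy : ∀ i, y i = 1 ∨ y i = -1) :
    ∑ i, y i * x i = Fintype.card ι - 2 * #{i | y i ≠ x i} := by
  have hterm : ∀ i, y i * x i = 1 - 2 * if y i ≠ x i then 1 else 0 := fun i => by
    rw [mul_eq_ite_of_sign (hy i) (hx i)]
    by_cases h : y i = x i <;> norm_num [h]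
  simp only [hterm, sum_sub_distrib, ← mul_sum, sum_boole, sum_const, card_univ,
    nsmul_eq_mul, mul_one]

lemma sum_mul_le_card {x y : ι → ℝ}
    (hx : ∀ i, x i = 1 ∨ x i = -1) (hy : ∀ i, y i = 1 ∨ y i = -1) :
    ∑ i, y i * x i ≤ Fintype.card ι := by
  classical
  rw [sum_mul_eq_card_sub_two_mul_card_ne hx hy]
  linarith [(#{i | y i ≠ x i}).cast_nonneg (α := ℝ)]

lemma card_sub_one_lt_sum_mul_iff {x y : ι → ℝ}
    (hx : ∀ i, x i = 1 ∨ x i = -1) (hy : ∀ i, y i = 1 ∨ y i = -1) :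
    (Fintype.card ι : ℝ) - 1 < ∑ i, y i * x i ↔ y = x := by
  classical
  rw [sum_mul_eq_card_sub_two_mul_card_ne hx hy, funext_iff]
  have hcount : (2 * #{i | y i ≠ x i} : ℝ) < 1 ↔ #{i | y i ≠ x i} = 0 := by
    norm_cast; omega
  simp only [sub_lt_sub_iff_left, hcount, card_eq_zero, filter_eq_empty_iff, mem_univ,
    true_implies, not_not]

lemma binAct_sub_binAct_sum_mul {x y : ι → ℝ}
    (hx : ∀ i, x i = 1 ∨ x i = -1) (hy : ∀ i, y i = 1 ∨ y i = -1) :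
    binAct (Fintype.card ι - 1) (∑ i, y i * x i) - binAct (Fintype.card ι) (∑ i, y i * x i) =
      if y = x then 2 else 0 := by
  rw [binAct_of_le (sum_mul_le_card hx hy)]
  split_ifs with h
  · rw [binAct_of_lt ((card_sub_one_lt_sum_mul_iff hx hy).2 h)]; norm_num
  · rw [binAct_of_le (not_lt.1 (mt (card_sub_one_lt_sum_mul_iff hx hy).1 h))]; norm_num

end SignVectors

section CubeNetwork

variable {ι : Type*} [Fintype ι] [DecidableEq ι]

def cubeWeights (i : ι) (k : (ι → Bool) × Bool) : ℝ := signOfBool (k.1 i)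

def cubeThresholds (k : (ι → Bool) × Bool) : ℝ :=
  if k.2 then Fintype.card ι - 1 else Fintype.card ι

noncomputable def cubeOutputWeights (f : (ι → ℝ) → ℝ) (k : (ι → Bool) × Bool) : ℝ :=
  if k.2 then f (signOfBool ∘ k.1) / 2 else -(f (signOfBool ∘ k.1) / 2)

theorem bnnOutput_cube (f : (ι → ℝ) → ℝ) {x : ι → ℝ} (hx : ∀ i, x i = 1 ∨ x i = -1) :
    bnnOutput cubeWeights cubeThresholds (cubeOutputWeights f) x = f x := by
  obtain ⟨y₀, rfl⟩ := exists_signOfBool_comp_eq hx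
  have hneuron : ∀ y : ι → Bool,
      ∑ b : Bool, cubeOutputWeights f (y, b) *
          binAct (cubeThresholds (y, b)) (∑ i, cubeWeights i (y, b) * (signOfBool ∘ y₀) i) =
        if y = y₀ then f (signOfBool ∘ y) else 0 := fun y => by
    have hwindow := binAct_sub_binAct_sum_mul (x := signOfBool ∘ y₀) (y := signOfBool ∘ y)
      (fun i => signOfBool_eq_one_or (y₀ i)) (fun i => signOfBool_eq_one_or (y i))
    simp only [signOfBool_injective.comp_left.eq_iff, Fintype.sum_bool, cubeOutputWeights,
      cubeThresholds, cubeWeights, if_true, Bool.false_eq_true, if_false,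
      Function.comp_apply] at hwindow ⊢
    rw [neg_mul, ← sub_eq_add_neg, ← mul_sub, hwindow]
    split_ifs <;> ring
  simp only [bnnOutput, Fintype.sum_prod_type, hneuron, Fintype.sum_ite_eq']

end CubeNetwork

theorem bnn_one_hidden_layer_exact_representation_binary_inputs_general
    (d : ℕ) (f : (Fin d → ℝ) → ℝ) :
    ∃ (n : ℕ) (W : Fin d → Fin n → ℝ) (θ : Fin n → ℝ) (v : Fin n → ℝ),
      (∀ i j, W i j = 1 ∨ W i j = -1) ∧
      ∀ x : Fin d → ℝ, (∀ i, x i = 1 ∨ x i = -1) →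
        (∑ j, v j * binAct (θ j) (∑ i, W i j * x i)) = f x := by
  let e := (Fintype.equivFin ((Fin d → Bool) × Bool)).symm
  refine ⟨_, fun i j => cubeWeights i (e j), cubeThresholds ∘ e, cubeOutputWeights f ∘ e,
    fun i j => signOfBool_eq_one_or _, fun x hx => ?_⟩
  exact (bnnOutput_comp_equiv e _ _ _ x).trans (bnnOutput_cube f hx)

/-- **Exact representation of functions on the binary hypercube by single-hidden-layer
fully connected BNNs.** For every dimension `d ≥ 1` and every `f : {−1,1}^d → ℝ`,
there is a single-hidden-layer fully connected BNN (binary hidden weights `W`,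
thresholds `θ`, real output weights `v`) whose output
`O x = ∑ j, v j * σ_{θ j} (∑ i, W i j * x i)` equals `f x` for all `x ∈ {−1,1}^d`. -/
theorem bnn_one_hidden_layer_exact_representation_binary_inputs
    (d : ℕ) (hd : 1 ≤ d) (f : (Fin d → ℝ) → ℝ) :
    ∃ (n : ℕ) (W : Fin d → Fin n → ℝ) (θ : Fin n → ℝ) (v : Fin n → ℝ),
      (∀ i j, W i j = 1 ∨ W i j = -1) ∧
      ∀ x : Fin d → ℝ, (∀ i, x i = 1 ∨ x i = -1) →
        (∑ j, v j * binAct (θ j) (∑ i, W i j * x i)) = f x :=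
  bnn_one_hidden_layer_exact_representation_binary_inputs_general d f
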